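/- arXiv:1701.03888 — 3 statements merged into one kernel-verified Lean document; each statement's English description precedes it below -/
import Mathlib

section
/- For every natural number N, every integer k with 0 ≤ k ≤ N, and all real numbers x and Δ, the identity P̃^{(N+1,1/2)}_{k+1}(x) = ((k+1)x + Δ²)·P^{(N,1/2)}_k(x) − k(k+1)(N−k)·x·P^{(N,1/2)}_{k−1}(x) holds (with the convention P^{(N,1/2)}_{−1}(x) = 0). -/
/-- The constraint polynomials `P^{(N,ε)}_k(x)` of the asymmetric quantum Rabi model,
defined by the recursion `P₀ = 1`, `P₁ = x + Δ² − 1 − 2ε`,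
`P_k = (k x + Δ² − k² − 2kε) P_{k−1} − k(k−1)(N−k+1) x P_{k−2}`. -/
noncomputable def constraintP (N : ℕ) (ε Δ x : ℝ) : ℕ → ℝ
  | 0 => 1
  | 1 => x + Δ ^ 2 - 1 - 2 * ε
  | (k + 2) =>
      (((k : ℝ) + 2) * x + Δ ^ 2 - ((k : ℝ) + 2) ^ 2 - 2 * ((k : ℝ) + 2) * ε) *
          constraintP N ε Δ x (k + 1) -
        ((k : ℝ) + 2) * ((k : ℝ) + 1) * ((N : ℝ) - ((k : ℝ) + 2) + 1) * x *
          constraintP N ε Δ x k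

/-- The companion constraint polynomials `P̃^{(N,ε)}_k(x)`, i.e. the same recursion with
`ε` replaced by `−ε`. -/
noncomputable def constraintPt (N : ℕ) (ε Δ x : ℝ) : ℕ → ℝ
  | 0 => 1
  | 1 => x + Δ ^ 2 - 1 + 2 * ε
  | (k + 2) =>
      (((k : ℝ) + 2) * x + Δ ^ 2 - ((k : ℝ) + 2) ^ 2 + 2 * ((k : ℝ) + 2) * ε) *
          constraintPt N ε Δ x (k + 1) -
        ((k : ℝ) + 2) * ((k : ℝ) + 1) * ((N : ℝ) - ((k : ℝ) + 2) + 1) * x *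
          constraintPt N ε Δ x k

/-! At `ε = 1/2` the recursions for `P^{(N)}_{k+1}` and for `P̃^{(N+1)}_{k+2}` share the quadratic
term `−(k+1)(k+2)`, and their off-diagonal weights `(k+1)k(N−k)` and `(k+1)(k+2)(N−k)` agree up to
the index shift, because `N ↦ N+1` compensates `k ↦ k+1`. Hence the right-hand side satisfies the
recursion of `P̃^{(N+1,1/2)}_{k+1}` in `k`, and the identity follows by two-step induction. -/

section HalfRecursion

variable (N : ℕ) (Δ x : ℝ)

/-- For `k = 0` the factor `k` cancels the junk value `P_{0 - 1} = P_0`. -/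
lemma constraintP_half_succ (k : ℕ) :
    constraintP N (1 / 2) Δ x (k + 1) =
      (((k : ℝ) + 1) * x + Δ ^ 2 - ((k : ℝ) + 1) * ((k : ℝ) + 2)) * constraintP N (1 / 2) Δ x k -
        ((k : ℝ) + 1) * (k : ℝ) * ((N : ℝ) - (k : ℝ)) * x * constraintP N (1 / 2) Δ x (k - 1) := by
  cases k with
  | zero => norm_num [constraintP]; ring
  | succ k =>
    rw [constraintP, Nat.add_sub_cancel]
    push_cast
    ring

lemma constraintPt_succ_half_add_two (k : ℕ) :
    constraintPt (N + 1) (1 / 2) Δ x (k + 2) =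
      (((k : ℝ) + 2) * x + Δ ^ 2 - ((k : ℝ) + 1) * ((k : ℝ) + 2)) *
          constraintPt (N + 1) (1 / 2) Δ x (k + 1) -
        ((k : ℝ) + 1) * ((k : ℝ) + 2) * ((N : ℝ) - (k : ℝ)) * x *
          constraintPt (N + 1) (1 / 2) Δ x k := by
  rw [constraintPt]
  push_cast
  ring

end HalfRecursion

theorem constraintPt_eq_combination_general (N k : ℕ) (x Δ : ℝ) :
    constraintPt (N + 1) (1 / 2) Δ x (k + 1) =
      (((k : ℝ) + 1) * x + Δ ^ 2) * constraintP N (1 / 2) Δ x k -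
        (k : ℝ) * ((k : ℝ) + 1) * ((N : ℝ) - (k : ℝ)) * x *
          constraintP N (1 / 2) Δ x (k - 1) := by
  induction k using Nat.twoStepInduction with
  | zero => simp [constraintP, constraintPt]
  | one => norm_num [constraintP, constraintPt]; ring
  | more k ih ih_succ =>
    simp only [Nat.add_sub_cancel, Nat.add_succ_sub_one] at ih_succ ⊢
    rw [constraintPt_succ_half_add_two, ih_succ, ih, constraintP_half_succ N Δ x (k + 1),
      constraintP_half_succ N Δ x k, Nat.add_sub_cancel]
    push_cast
    ring

/-- For all `0 ≤ k ≤ N` and all real `x`, `Δ`: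
`P̃^{(N+1,1/2)}_{k+1}(x) = ((k+1)x + Δ²)·P^{(N,1/2)}_k(x) − k(k+1)(N−k)·x·P^{(N,1/2)}_{k−1}(x)`.
(When `k = 0` the last term vanishes because of the factor `k`, which realizes the convention
`P^{(N,1/2)}_{−1} = 0`.) -/
theorem constraintPt_eq_combination (N k : ℕ) (hk : k ≤ N) (x Δ : ℝ) :
    constraintPt (N + 1) (1 / 2) Δ x (k + 1) =
      (((k : ℝ) + 1) * x + Δ ^ 2) * constraintP N (1 / 2) Δ x k -
        (k : ℝ) * ((k : ℝ) + 1) * ((N : ℝ) - (k : ℝ)) * x *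
          constraintP N (1 / 2) Δ x (k - 1) :=
  constraintPt_eq_combination_general N k x Δ
end

section
/- For every N ∈ ℕ, every k with 0 ≤ k ≤ N, and all real x, Δ, ε, the determinant of the tridiagonal matrix M^{(N,ε)}_k(x,Δ) equals (−1)^{k+1}·Δ²·P^{(N,ε)}_k(x). -/
/-- The `(k+1)×(k+1)` tridiagonal matrix `M^{(N,ε)}_k(x,Δ)`: diagonal entries
`i² − i·x + 2εi − Δ²`, superdiagonal entries `(i+1)·x`, subdiagonal entries
`M[i+1][i] = i·(N−i)`, all other entries `0`. -/
noncomputable def tridiagM (N k : ℕ) (ε Δ x : ℝ) : Matrix (Fin (k + 1)) (Fin (k + 1)) ℝ :=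
  Matrix.of fun i j =>
    if (i : ℕ) = (j : ℕ) then (i : ℝ) ^ 2 - (i : ℝ) * x + 2 * ε * (i : ℝ) - Δ ^ 2
    else if (j : ℕ) = (i : ℕ) + 1 then ((i : ℝ) + 1) * x
    else if (i : ℕ) = (j : ℕ) + 1 then (j : ℝ) * ((N : ℝ) - (j : ℝ))
    else 0

/-! Expanding along the last row, the leading principal minors `D_n` of a tridiagonal matrix
satisfy the three-term recurrence `D_{n+2} = a_{n+1} D_{n+1} - b_n c_n D_n`. For `M^{(N,ε)}_k` this
is, after the sign `(-1)^{k+1}` and the factor `Δ²` are pulled out, the recurrence of `P^{(N,ε)}_k`,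
and the two initial values agree. -/

namespace Matrix

variable {R : Type*} [CommRing R] (a b c : ℕ → R)

def tridiagonal (n : ℕ) : Matrix (Fin n) (Fin n) R :=
  of fun i j =>
    if (i : ℕ) = j then a i
    else if (j : ℕ) = i + 1 then b i
    else if (i : ℕ) = j + 1 then c j
    else 0

theorem tridiagonal_apply_eq_zero {n : ℕ} {i j : Fin n} (hij : (i : ℕ) + 1 < j ∨ (j : ℕ) + 1 < i) :
    tridiagonal a b c n i j = 0 := by
  rw [tridiagonal, of_apply, if_neg, if_neg, if_neg] <;> omega

@[simp]
theorem submatrix_castSucc_tridiagonal (n : ℕ) :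
    (tridiagonal a b c (n + 1)).submatrix Fin.castSucc Fin.castSucc = tridiagonal a b c n := by
  ext i j
  simp [tridiagonal]

theorem det_tridiagonal_one : (tridiagonal a b c 1).det = a 0 := by
  simp [tridiagonal]

-- Deleting the last row and the column `n` leaves `b n` as the only nonzero entry of the last column.
theorem det_submatrix_castSucc_succAbove_tridiagonal (n : ℕ) :
    ((tridiagonal a b c (n + 2)).submatrix Fin.castSucc (Fin.last n).castSucc.succAbove).det =
      b n * (tridiagonal a b c n).det := by
  rw [det_succ_column _ (Fin.last n), Fintype.sum_eq_single (Fin.last n)]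
  · have hminor : ((tridiagonal a b c (n + 2)).submatrix Fin.castSucc
        (Fin.last n).castSucc.succAbove).submatrix Fin.castSucc Fin.castSucc =
        tridiagonal a b c n := by
      ext i j
      simp [tridiagonal, Fin.succAbove_castSucc_of_lt, Fin.castSucc_lt_last]
    rw [Fin.succAbove_last, hminor]
    simp [tridiagonal]
  · intro i hi
    rw [submatrix_apply, Fin.succAbove_castSucc_self, tridiagonal_apply_eq_zero, mul_zero, zero_mul]
    left
    simp [Fin.ext_iff] at hi ⊢
    omega

theorem det_tridiagonal_succ_succ (n : ℕ) :
    (tridiagonal a b c (n + 2)).det =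
      a (n + 1) * (tridiagonal a b c (n + 1)).det - b n * c n * (tridiagonal a b c n).det := by
  rw [det_succ_row _ (Fin.last _), Fintype.sum_eq_add (Fin.last _) (Fin.last n).castSucc]
  · rw [Fin.succAbove_last, det_submatrix_castSucc_succAbove_tridiagonal,
      submatrix_castSucc_tridiagonal]
    have hdiag : tridiagonal a b c (n + 2) (Fin.last _) (Fin.last _) = a (n + 1) := by
      simp [tridiagonal]
    have hsub : tridiagonal a b c (n + 2) (Fin.last _) (Fin.last n).castSucc = c n := by
      simp [tridiagonal, show n ≠ n + 2 by omega]
    rw [hdiag, hsub]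
    simp only [Fin.val_last, Fin.val_castSucc]
    have hodd : Odd (n + 1 + n) := ⟨n, by ring⟩
    rw [(Even.add_self (n + 1)).neg_one_pow, hodd.neg_one_pow]
    ring
  · simp [Fin.ext_iff]
  · intro j hj
    rw [tridiagonal_apply_eq_zero, mul_zero, zero_mul]
    right
    simp only [ne_eq, Fin.ext_iff, Fin.val_last, Fin.val_castSucc] at hj ⊢
    omega

end Matrix

theorem tridiagM_eq_tridiagonal (N k : ℕ) (ε Δ x : ℝ) :
    tridiagM N k ε Δ x =
      Matrix.tridiagonal (fun i => (i : ℝ) ^ 2 - i * x + 2 * ε * i - Δ ^ 2)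
        (fun i => ((i : ℝ) + 1) * x) (fun j => (j : ℝ) * (N - j)) (k + 1) :=
  rfl

theorem det_tridiagM_general (N k : ℕ) (x Δ ε : ℝ) :
    (tridiagM N k ε Δ x).det = (-1) ^ (k + 1) * Δ ^ 2 * constraintP N ε Δ x k := by
  induction k using Nat.twoStepInduction with
  | zero =>
    rw [tridiagM_eq_tridiagonal, Matrix.det_tridiagonal_one]
    simp [constraintP]
  | one =>
    rw [tridiagM_eq_tridiagonal, Matrix.det_tridiagonal_succ_succ, Matrix.det_tridiagonal_one,
      Matrix.det_isEmpty]
    simp only [constraintP]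
    push_cast
    ring
  | more k ih₀ ih₁ =>
    rw [tridiagM_eq_tridiagonal, Matrix.det_tridiagonal_succ_succ, ← tridiagM_eq_tridiagonal,
      ← tridiagM_eq_tridiagonal, ih₀, ih₁, constraintP]
    push_cast
    ring

/-- `det M^{(N,ε)}_k(x,Δ) = (−1)^{k+1}·Δ²·P^{(N,ε)}_k(x)` for `0 ≤ k ≤ N`. -/
theorem det_tridiagM (N k : ℕ) (hk : k ≤ N) (x Δ ε : ℝ) :
    (tridiagM N k ε Δ x).det = (-1) ^ (k + 1) * Δ ^ 2 * constraintP N ε Δ x k :=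
  det_tridiagM_general N k x Δ ε
end

section
/- Let N ≥ 1 be a natural number, ε and Δ real numbers, and let x > 0 be a real root of the companion constraint polynomial, i.e. P̃^{(N,ε)}_N(x) = 0. Then the (N+1)×(N+1) real tridiagonal matrix M̃^{(N,ε)}_N(x,Δ) has rank exactly N. -/
/-- The `(k+1)×(k+1)` tridiagonal matrix `M̃^{(N,ε)}_k(x,Δ)`: diagonal entries
`i² − i·x − 2εi − Δ²`, superdiagonal entries `M̃[i][i+1] = i·x` (so the `(0,1)` entry is `0`),
subdiagonal entries `M̃[i+1][i] = (i+1)·(N−i)`, all other entries `0`. -/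
noncomputable def tridiagMt (N k : ℕ) (ε Δ x : ℝ) : Matrix (Fin (k + 1)) (Fin (k + 1)) ℝ :=
  Matrix.of fun i j =>
    if (i : ℕ) = (j : ℕ) then (i : ℝ) ^ 2 - (i : ℝ) * x - 2 * ε * (i : ℝ) - Δ ^ 2
    else if (j : ℕ) = (i : ℕ) + 1 then (i : ℝ) * x
    else if (i : ℕ) = (j : ℕ) + 1 then ((j : ℝ) + 1) * ((N : ℝ) - (j : ℝ))
    else 0

/-! Expanding along the last row shows that the determinants of the matrices `M̃_k` obey the
three-term recursion of the `P̃_k`, whence `det M̃_N = (-1)^(N+1) Δ² P̃_N(x) = 0` and the rank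
is at most `N`. Conversely, deleting the first row and the last column of `M̃_N` leaves an
upper triangular matrix whose diagonal is the subdiagonal `(i+1)(N-i)`, `0 ≤ i < N`, of `M̃_N`;
it has no zero entry, so the rank is at least `N`. -/

namespace Matrix

theorem det_succ_succ_of_last_row_col {R : Type*} [CommRing R] {n : ℕ}
    (A : Matrix (Fin (n + 2)) (Fin (n + 2)) R)
    (hrow : ∀ j : Fin n, A (Fin.last _) j.castSucc.castSucc = 0)
    (hcol : ∀ i : Fin n, A i.castSucc.castSucc (Fin.last _) = 0) :
    A.det = A (Fin.last _) (Fin.last _) * (A.submatrix Fin.castSucc Fin.castSucc).det -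
      A (Fin.last _) (Fin.last n).castSucc * A (Fin.last n).castSucc (Fin.last _) *
        (A.submatrix (Fin.castSucc ∘ Fin.castSucc) (Fin.castSucc ∘ Fin.castSucc)).det := by
  have hminor : (A.submatrix Fin.castSucc (Fin.last n).castSucc.succAbove).det =
      A (Fin.last n).castSucc (Fin.last _) *
        (A.submatrix (Fin.castSucc ∘ Fin.castSucc) (Fin.castSucc ∘ Fin.castSucc)).det := by
    rw [det_succ_column _ (Fin.last n), Fin.sum_univ_castSucc,
      Finset.sum_eq_zero fun i _ => by simp [hcol]]
    have hcols : (Fin.last n).castSucc.succAbove ∘ Fin.castSucc = Fin.castSucc ∘ Fin.castSucc :=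
      funext fun i => Fin.succAbove_castSucc_of_lt _ _ (Fin.castSucc_lt_last i)
    simp [hcols]
  rw [det_succ_row A (Fin.last _), Fin.sum_univ_castSucc, Fin.sum_univ_castSucc,
    Finset.sum_eq_zero fun j _ => by simp [hrow], Fin.succAbove_last, hminor]
  simp only [Fin.val_last, Fin.val_castSucc, odd_add_one_self, Odd.neg_one_pow, neg_mul, one_mul,
    Even.add_self, Even.neg_pow, one_pow]
  ring

theorem rank_lt_card_of_det_eq_zero {K n : Type*} [Field K] [Fintype n] [DecidableEq n]
    {A : Matrix n n K} (h : A.det = 0) : A.rank < Fintype.card n := by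
  refine (rank_le_card_width A).lt_of_ne fun hrank => ?_
  have hsurj : Function.Surjective A.mulVec := by
    have : LinearMap.range A.mulVecLin = ⊤ :=
      Submodule.eq_top_of_finrank_eq (by rw [← rank, hrank, Module.finrank_fintype_fun_eq_card])
    exact LinearMap.range_eq_top.mp this
  exact (isUnit_iff_isUnit_det A).mp (mulVec_surjective_iff_isUnit.mp hsurj) |>.ne_zero h

end Matrix

section

variable (N : ℕ) (ε Δ x : ℝ)

theorem tridiagMt_submatrix_castSucc (k : ℕ) :
    (tridiagMt N (k + 1) ε Δ x).submatrix Fin.castSucc Fin.castSucc = tridiagMt N k ε Δ x := by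
  ext i j
  simp [tridiagMt]

theorem tridiagMt_apply_of_far {k : ℕ} {i j : Fin (k + 1)}
    (h : (j : ℕ) + 1 < i ∨ (i : ℕ) + 1 < j) :
    tridiagMt N k ε Δ x i j = 0 := by
  simp only [tridiagMt, Matrix.of_apply]
  split_ifs <;> first | rfl | omega

theorem det_tridiagMt_add_two (k : ℕ) :
    (tridiagMt N (k + 2) ε Δ x).det =
      (((k : ℝ) + 2) ^ 2 - ((k : ℝ) + 2) * x - 2 * ε * ((k : ℝ) + 2) - Δ ^ 2) *
          (tridiagMt N (k + 1) ε Δ x).det -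
        ((k : ℝ) + 2) * ((k : ℝ) + 1) * ((N : ℝ) - k - 1) * x *
          (tridiagMt N k ε Δ x).det := by
  rw [Matrix.det_succ_succ_of_last_row_col _
      (fun _ => tridiagMt_apply_of_far N ε Δ x (by simp; omega))
      (fun _ => tridiagMt_apply_of_far N ε Δ x (by simp; omega)),
    ← Matrix.submatrix_submatrix, tridiagMt_submatrix_castSucc, tridiagMt_submatrix_castSucc]
  simp only [tridiagMt, Matrix.of_apply, Fin.val_last, Fin.val_castSucc, ↓reduceIte,
    Nat.add_right_cancel_iff, Nat.add_eq_left, Nat.left_eq_add, one_ne_zero,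
    OfNat.ofNat_ne_zero, Nat.cast_add, Nat.cast_one]
  ring

theorem det_tridiagMt (k : ℕ) :
    (tridiagMt N k ε Δ x).det = (-1) ^ (k + 1) * Δ ^ 2 * constraintPt N ε Δ x k := by
  induction k using Nat.twoStepInduction with
  | zero => simp [tridiagMt, constraintPt]
  | one =>
    rw [Matrix.det_fin_two]
    norm_num [tridiagMt, constraintPt]
    ring
  | more k ih₀ ih₁ =>
    rw [det_tridiagMt_add_two, ih₀, ih₁, constraintPt]
    ring

theorem tridiagMt_succ_castSucc {k : ℕ} (i : Fin k) :
    tridiagMt N k ε Δ x i.succ i.castSucc = ((i : ℝ) + 1) * ((N : ℝ) - i) := by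
  simp [tridiagMt, show (i : ℕ) ≠ i + 1 + 1 by omega]

theorem le_rank_tridiagMt {k : ℕ} (hk : k ≤ N) : k ≤ (tridiagMt N k ε Δ x).rank := by
  set B := (tridiagMt N k ε Δ x).submatrix Fin.succ Fin.castSucc
  have hB : B.IsUpperTriangular := fun i j hji =>
    tridiagMt_apply_of_far N ε Δ x (Or.inl (by simpa using hji))
  have hdiag : ∀ i, B.diag i ≠ 0 := fun i => by
    have hi : (i : ℝ) < N := by exact_mod_cast i.is_lt.trans_le hk
    simp only [B, Matrix.diag_apply, Matrix.submatrix_apply, tridiagMt_succ_castSucc]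
    exact mul_ne_zero (by positivity) (sub_ne_zero.mpr hi.ne')
  calc k = B.rank := by
        rw [Matrix.rank_of_det_ne_zero (by simpa [Matrix.det_of_isUpperTriangular hB,
          Finset.prod_ne_zero_iff] using hdiag), Fintype.card_fin]
    _ ≤ _ := Matrix.rank_submatrix_le _ _ _

end

theorem rank_tridiagMt_general (N : ℕ) (ε Δ : ℝ) (x : ℝ)
    (hroot : constraintPt N ε Δ x N = 0) :
    (tridiagMt N N ε Δ x).rank = N := by
  have hdet : (tridiagMt N N ε Δ x).det = 0 := by rw [det_tridiagMt, hroot, mul_zero]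
  have hlt := Matrix.rank_lt_card_of_det_eq_zero hdet
  rw [Fintype.card_fin] at hlt
  exact le_antisymm (Nat.le_of_lt_succ hlt) (le_rank_tridiagMt N ε Δ x le_rfl)

/-- If `x > 0` is a root of `P̃^{(N,ε)}_N`, then `M̃^{(N,ε)}_N(x,Δ)` has rank exactly `N`. -/
theorem rank_tridiagMt (N : ℕ) (hN : 1 ≤ N) (ε Δ : ℝ) (x : ℝ) (hx : 0 < x)
    (hroot : constraintPt N ε Δ x N = 0) :
    (tridiagMt N N ε Δ x).rank = N :=
  rank_tridiagMt_general N ε Δ x hroot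
end
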